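/- Let $(X,d)$ and $(Y,\rho)$ be metric spaces, $s>0$, and let $f\colon X\to Y$ be Lipschitz. Suppose $x\in X$ and $0<\lambda_x\le 1$ satisfy $\limsup_{r\to 0} \mathcal{H}^s\big(B(f(x),\lambda_x r)\setminus f(B(x,r))\big)/(2\lambda_x r)^s < \tfrac12\,\Theta^s_*(Y,f(x))$. Then for every $0<\lambda\le\lambda_x$ the same inequality holds with $\lambda$ in place of $\lambda_x$: $\limsup_{r\to 0} \mathcal{H}^s\big(B(f(x),\lambda r)\setminus f(B(x,r))\big)/(2\lambda r)^s < \tfrac12\,\Theta^s_*(Y,f(x))$. -/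

import Mathlib

open MeasureTheory Metric Filter Set
open scoped ENNReal Topology NNReal

/-! Put `c = λ / λₓ ≤ 1`. Since `B(x, c r) ⊆ B(x, r)` and `λₓ (c r) = λ r`, the ratio for `λ` at
scale `r` is bounded by the ratio for `λₓ` at scale `c r`, and the substitution `r ↦ c r` does not
change a limsup as `r → 0⁺`. -/

section ScalingNhdsGT

variable {𝕜 : Type*} [Field 𝕜] [LinearOrder 𝕜] [IsStrictOrderedRing 𝕜] [TopologicalSpace 𝕜]
  [OrderTopology 𝕜]

theorem map_mulLeft_nhdsGT_zero {c : 𝕜} (hc : 0 < c) : map (c * ·) (𝓝[>] 0) = 𝓝[>] 0 := by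
  conv_lhs => rw [← comap_mulLeft_nhdsGT_zero hc]
  exact map_comap_of_surjective (fun y => ⟨y / c, mul_div_cancel₀ y hc.ne'⟩) _

theorem limsup_comp_mulLeft_nhdsGT_zero {β : Type*} [ConditionallyCompleteLattice β] (g : 𝕜 → β)
    {c : 𝕜} (hc : 0 < c) : limsup (fun r => g (c * r)) (𝓝[>] 0) = limsup g (𝓝[>] 0) :=
  congrArg (limsup g) (map_mulLeft_nhdsGT_zero hc)

end ScalingNhdsGT

section MissedMassRatio

variable {X Y : Type*} [MetricSpace X] [MetricSpace Y] [MeasurableSpace Y]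

noncomputable def missedMassRatio (μ : Measure Y) (s : ℝ) (f : X → Y) (x : X) (l r : ℝ) : ℝ≥0∞ :=
  μ (closedBall (f x) (l * r) \ f '' closedBall x r) / ENNReal.ofReal ((2 * l * r) ^ s)

theorem missedMassRatio_le_div_mul (μ : Measure Y) (s : ℝ) (f : X → Y) (x : X) {l l' r : ℝ}
    (hl : 0 < l) (hll' : l ≤ l') (hr : 0 ≤ r) :
    missedMassRatio μ s f x l r ≤ missedMassRatio μ s f x l' (l / l' * r) := by
  have hl' : 0 < l' := hl.trans_le hll'
  have hscale : l' * (l / l' * r) = l * r := by field_simp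
  have hball : closedBall x (l / l' * r) ⊆ closedBall x r :=
    closedBall_subset_closedBall <| mul_le_of_le_one_left hr <| (div_le_one hl').2 hll'
  unfold missedMassRatio
  rw [hscale, mul_assoc 2 l', hscale, ← mul_assoc]
  gcongr

theorem limsup_missedMassRatio_mono (μ : Measure Y) (s : ℝ) (f : X → Y) (x : X) {l l' : ℝ}
    (hl : 0 < l) (hll' : l ≤ l') :
    limsup (missedMassRatio μ s f x l) (𝓝[>] 0) ≤ limsup (missedMassRatio μ s f x l') (𝓝[>] 0) :=
  calc limsup (missedMassRatio μ s f x l) (𝓝[>] 0)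
      ≤ limsup (fun r => missedMassRatio μ s f x l' (l / l' * r)) (𝓝[>] 0) :=
        limsup_le_limsup <| eventually_nhdsWithin_of_forall fun _ hr =>
          missedMassRatio_le_div_mul μ s f x hl hll' (le_of_lt hr)
    _ = limsup (missedMassRatio μ s f x l') (𝓝[>] 0) :=
        limsup_comp_mulLeft_nhdsGT_zero _ (div_pos hl (hl.trans_le hll'))

end MissedMassRatio

theorem david_condition_mono_general
    {X Y : Type*} [MetricSpace X]
    [MetricSpace Y] [MeasurableSpace Y] [BorelSpace Y]
    {s : ℝ} (f : X → Y)
    (x : X) {lx : ℝ}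
    (hmain : Filter.limsup (fun r : ℝ =>
        μH[s] (closedBall (f x) (lx * r) \ f '' closedBall x r)
          / ENNReal.ofReal ((2 * lx * r) ^ s)) (𝓝[>] (0 : ℝ))
      < (1 / 2) * Filter.liminf (fun r : ℝ =>
          μH[s] (closedBall (f x) r) / ENNReal.ofReal ((2 * r) ^ s)) (𝓝[>] (0 : ℝ))) :
    ∀ l : ℝ, 0 < l → l ≤ lx →
      Filter.limsup (fun r : ℝ =>
          μH[s] (closedBall (f x) (l * r) \ f '' closedBall x r)
            / ENNReal.ofReal ((2 * l * r) ^ s)) (𝓝[>] (0 : ℝ))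
        < (1 / 2) * Filter.liminf (fun r : ℝ =>
            μH[s] (closedBall (f x) r) / ENNReal.ofReal ((2 * r) ^ s)) (𝓝[>] (0 : ℝ)) :=
  fun _ hl hllx => (limsup_missedMassRatio_mono μH[s] s f x hl hllx).trans_lt hmain

/-- If the David-type limsup inequality holds at `x` for some `0 < lx ≤ 1`, then it
also holds for every `0 < l ≤ lx`. -/
theorem david_condition_mono
    {X Y : Type*} [MetricSpace X] [MeasurableSpace X] [BorelSpace X]
    [MetricSpace Y] [MeasurableSpace Y] [BorelSpace Y]
    {s : ℝ} (hs : 0 < s) (f : X → Y)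
    (hlip : ∃ L : ℝ≥0, LipschitzWith L f)
    (x : X) {lx : ℝ} (hlx0 : 0 < lx) (hlx1 : lx ≤ 1)
    (hmain : Filter.limsup (fun r : ℝ =>
        μH[s] (closedBall (f x) (lx * r) \ f '' closedBall x r)
          / ENNReal.ofReal ((2 * lx * r) ^ s)) (𝓝[>] (0 : ℝ))
      < (1 / 2) * Filter.liminf (fun r : ℝ =>
          μH[s] (closedBall (f x) r) / ENNReal.ofReal ((2 * r) ^ s)) (𝓝[>] (0 : ℝ))) :
    ∀ l : ℝ, 0 < l → l ≤ lx →
      Filter.limsup (fun r : ℝ =>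
          μH[s] (closedBall (f x) (l * r) \ f '' closedBall x r)
            / ENNReal.ofReal ((2 * l * r) ^ s)) (𝓝[>] (0 : ℝ))
        < (1 / 2) * Filter.liminf (fun r : ℝ =>
            μH[s] (closedBall (f x) r) / ENNReal.ofReal ((2 * r) ^ s)) (𝓝[>] (0 : ℝ)) :=
  david_condition_mono_general f x hmain
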